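/- For a single unordered character on a tree, if edge (u, v) has root sets with VV(u) ∩ VV(v) ≠ ∅, then contracting (u, v) into a new vertex w yields a tree with the same MP-cost, and the root set of w in the contracted tree equals VV(u) ∩ VV(v). -/

import Mathlib

open scoped Classical

/-- The cost of a full state assignment `f`: the number of edges of `G` whose
two endpoints receive different states. -/
noncomputable def assignCost {V S : Type} [Fintype V] (G : SimpleGraph V)
    (f : V → S) : ℕ :=
  (Finset.univ.filter (fun p : V × V => G.Adj p.1 p.2 ∧ f p.1 ≠ f p.2)).card / 2

/-- `f` extends the partial labelling `ℓ`. -/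
def Extends {V S : Type} (ℓ : V → Option S) (f : V → S) : Prop :=
  ∀ v s, ℓ v = some s → f v = s

/-- The most parsimonious cost: the minimum, over all state assignments
extending the fixed labels, of the number of edges with differing endpoint states. -/
noncomputable def mpCost {V S : Type} [Fintype V] (G : SimpleGraph V)
    (ℓ : V → Option S) : ℕ :=
  sInf {c | ∃ f : V → S, Extends ℓ f ∧ c = assignCost G f}

/-- `f` is a minimum-cost assignment extending `ℓ`. -/
def IsOptimal {V S : Type} [Fintype V] (G : SimpleGraph V) (ℓ : V → Option S)
    (f : V → S) : Prop :=
  Extends ℓ f ∧ assignCost G f = mpCost G ℓ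

/-- The root set of a vertex: the set of states it receives across all
minimum-cost assignments extending the labels. -/
def rootSet {V S : Type} [Fintype V] (G : SimpleGraph V) (ℓ : V → Option S)
    (v : V) : Set S :=
  {s | ∃ f : V → S, IsOptimal G ℓ f ∧ f v = s}


/-- Contract the edge `(u, v)`: identify `u` and `v` into the single vertex
`u`, which becomes adjacent to all former neighbors of `u` and of `v`. -/
def contractGraph {V : Type} (G : SimpleGraph V) (u v : V) :
    SimpleGraph {z : V // z ≠ v} where
  Adj a b := a ≠ b ∧
    (G.Adj a.1 b.1 ∨ (a.1 = u ∧ G.Adj v b.1) ∨ (b.1 = u ∧ G.Adj v a.1))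
  symm := by
    refine ⟨?_⟩
    rintro a b ⟨hab, h⟩
    refine ⟨hab.symm, ?_⟩
    rcases h with h | ⟨h1, h2⟩ | ⟨h1, h2⟩
    · exact Or.inl h.symm
    · exact Or.inr (Or.inr ⟨h1, h2⟩)
    · exact Or.inr (Or.inl ⟨h1, h2⟩)
  loopless := by refine ⟨?_⟩; rintro a ⟨h, -⟩; exact h rfl

/-!
Every edge `uv` of a tree is a bridge. Splicing an optimal assignment putting `s` on `u` with one
putting `s` on `v` along the two sides of the bridge gives two assignments whose costs add up to at
most the sum of the original costs; as neither can be cheaper than optimal, the splice that puts `s`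
on both `u` and `v` is optimal. Assignments of the contracted tree are the assignments of the tree
that agree on `u` and `v`, at the same cost since `u` and `v` have no common neighbour. So the
MP-cost is unchanged, and the optimal assignments of the contracted tree are the optimal ones of the
tree agreeing on `u` and `v`.
-/

open Finset

variable {V S : Type}

lemma SimpleGraph.even_card_filter_adj [Fintype V] (H : SimpleGraph V) :
    Even #{p : V × V | H.Adj p.1 p.2} := by
  have hdart : Fintype.card H.Dart = #{p : V × V | H.Adj p.1 p.2} := by
    rw [← Fintype.card_subtype]
    exact Fintype.card_congr
      { toFun := fun d => ⟨d.toProd, d.adj⟩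
        invFun := fun p => ⟨p.1, p.2⟩
        left_inv := fun _ => rfl
        right_inv := fun _ => rfl }
  rw [← hdart, H.dart_card_eq_twice_card_edges]
  exact even_two_mul _

noncomputable def mismatch (G : SimpleGraph V) (f : V → S) (p : V × V) : ℕ :=
  if G.Adj p.1 p.2 ∧ f p.1 ≠ f p.2 then 1 else 0

lemma two_mul_assignCost [Fintype V] (G : SimpleGraph V) (f : V → S) :
    2 * assignCost G f = ∑ p, mismatch G f p := by
  have heven := (G ⊓ (⊤ : SimpleGraph S).comap f).even_card_filter_adj
  simp only [SimpleGraph.inf_adj, SimpleGraph.comap_adj, SimpleGraph.top_adj] at heven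
  rw [assignCost, Nat.two_mul_div_two_of_even heven, Finset.card_filter]
  rfl

lemma Extends.piecewise {ℓ : V → Option S} {f g : V → S} (hf : Extends ℓ f) (hg : Extends ℓ g)
    (A : Set V) [DecidablePred (· ∈ A)] : Extends ℓ (A.piecewise f g) := by
  intro x s hx
  by_cases hxA : x ∈ A
  · rw [Set.piecewise_eq_of_mem A f g hxA, hf x s hx]
  · rw [Set.piecewise_eq_of_notMem A f g hxA, hg x s hx]

lemma mpCost_le_assignCost [Fintype V] (G : SimpleGraph V) {ℓ : V → Option S} {f : V → S}
    (hf : Extends ℓ f) : mpCost G ℓ ≤ assignCost G f :=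
  Nat.sInf_le ⟨f, hf, rfl⟩

lemma exists_isOptimal [Fintype V] [Nonempty S] (G : SimpleGraph V) (ℓ : V → Option S) :
    ∃ f, IsOptimal G ℓ f := by
  have hne : {c | ∃ f : V → S, Extends ℓ f ∧ c = assignCost G f}.Nonempty :=
    ⟨_, fun x => (ℓ x).getD (Classical.arbitrary S), fun x s hx => by simp [hx], rfl⟩
  obtain ⟨f, hf, hc⟩ := Nat.sInf_mem hne
  exact ⟨f, hf, hc.symm⟩

section Splice

variable {G : SimpleGraph V} {A : Set V} [DecidablePred (· ∈ A)] {u v : V}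

-- On the crossing edge `uv` this is the triangle inequality of the discrete metric on `S`.
lemma mismatch_piecewise_add_le {f g : V → S}
    (hcut : ∀ x y, G.Adj x y → x ∈ A → y ∉ A → x = u ∧ y = v) (hfg : f u = g v)
    (p : V × V) :
    mismatch G (A.piecewise f g) p + mismatch G (A.piecewise g f) p ≤
      mismatch G f p + mismatch G g p := by
  obtain ⟨x, y⟩ := p
  by_cases hxy : G.Adj x y
  swap
  · simp [mismatch, hxy]
  by_cases hx : x ∈ A <;> by_cases hy : y ∈ A
  · simp [mismatch, hx, hy]
  · obtain ⟨rfl, rfl⟩ := hcut x y hxy hx hy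
    simp only [mismatch, Set.piecewise_eq_of_mem A _ _ hx, Set.piecewise_eq_of_notMem A _ _ hy]
    split_ifs <;> simp_all
  · obtain ⟨rfl, rfl⟩ := hcut y x hxy.symm hy hx
    simp only [mismatch, Set.piecewise_eq_of_mem A _ _ hy, Set.piecewise_eq_of_notMem A _ _ hx]
    split_ifs <;> simp_all
  · simp [mismatch, hx, hy, add_comm]

lemma IsOptimal.piecewise [Fintype V] {ℓ : V → Option S} {f g : V → S} (hf : IsOptimal G ℓ f)
    (hg : IsOptimal G ℓ g) (hcut : ∀ x y, G.Adj x y → x ∈ A → y ∉ A → x = u ∧ y = v)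
    (hfg : f u = g v) : IsOptimal G ℓ (A.piecewise f g) := by
  have hsum : 2 * assignCost G (A.piecewise f g) + 2 * assignCost G (A.piecewise g f) ≤
      2 * assignCost G f + 2 * assignCost G g := by
    simp only [two_mul_assignCost, ← Finset.sum_add_distrib]
    exact Finset.sum_le_sum fun p _ => mismatch_piecewise_add_le hcut hfg p
  rw [hf.2, hg.2] at hsum
  have hle := mpCost_le_assignCost G (hg.1.piecewise hf.1 A)
  refine ⟨hf.1.piecewise hg.1 A,
    le_antisymm ?_ (mpCost_le_assignCost G (hf.1.piecewise hg.1 A))⟩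
  omega

end Splice

lemma SimpleGraph.eq_of_adj_of_reachable_deleteEdges {G : SimpleGraph V} {u v x y : V}
    (hx : (G.deleteEdges {s(u, v)}).Reachable u x)
    (hy : ¬(G.deleteEdges {s(u, v)}).Reachable u y) (hxy : G.Adj x y) : x = u ∧ y = v := by
  by_cases he : s(x, y) = s(u, v)
  · rcases Sym2.eq_iff.mp he with h | ⟨rfl, rfl⟩
    · exact h
    · exact absurd .rfl hy
  · exact absurd (hx.trans (SimpleGraph.Adj.reachable (by simp [hxy, he]))) hy

lemma SimpleGraph.IsBridge.not_adj_of_adj {G : SimpleGraph V} {u v w : V}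
    (hb : G.IsBridge s(u, v)) (hu : G.Adj u w) : ¬G.Adj v w := by
  intro hv
  have hwu : w ≠ u := hu.ne.symm
  have hwv : w ≠ v := hv.ne.symm
  have huw : (G.deleteEdges {s(u, v)}).Adj u w := by simp [hu, hwu, hwv]
  have hwv' : (G.deleteEdges {s(u, v)}).Adj w v := by simp [hv.symm, hwu, hwv]
  exact SimpleGraph.isBridge_iff.mp hb (huw.reachable.trans hwv'.reachable)

lemma exists_isOptimal_eq_of_mem_rootSet_inter [Fintype V] {G : SimpleGraph V}
    {ℓ : V → Option S} {u v : V} {s : S} (hb : G.IsBridge s(u, v))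
    (hs : s ∈ rootSet G ℓ u ∩ rootSet G ℓ v) : ∃ f, IsOptimal G ℓ f ∧ f u = s ∧ f v = s := by
  obtain ⟨⟨f, hf, rfl⟩, g, hg, hgv⟩ := hs
  set A : Set V := {x | (G.deleteEdges {s(u, v)}).Reachable u x}
  have hcut : ∀ x y, G.Adj x y → x ∈ A → y ∉ A → x = u ∧ y = v :=
    fun x y hxy hx hy => SimpleGraph.eq_of_adj_of_reachable_deleteEdges hx hy hxy
  exact ⟨A.piecewise f g, hf.piecewise hg hcut hgv.symm,
    Set.piecewise_eq_of_mem A f g .rfl, (Set.piecewise_eq_of_notMem A f g hb).trans hgv⟩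

section Contraction

variable {G : SimpleGraph V} {u v : V} (huv : u ≠ v)

noncomputable def contractMap (x : V) : {z : V // z ≠ v} :=
  if hx : x = v then ⟨u, huv⟩ else ⟨x, hx⟩

@[simp] lemma contractMap_self : contractMap huv v = ⟨u, huv⟩ := dif_pos rfl

lemma contractMap_of_ne {x : V} (hx : x ≠ v) : contractMap huv x = ⟨x, hx⟩ := dif_neg hx

@[simp] lemma contractMap_left : contractMap huv u = ⟨u, huv⟩ := contractMap_of_ne huv huv

@[simp] lemma contractMap_val (a : {z : V // z ≠ v}) : contractMap huv a.1 = a :=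
  contractMap_of_ne huv a.2

lemma contractMap_eq_of_ne {x y : V} (h : contractMap huv x = contractMap huv y) (hxy : x ≠ y) :
    x = u ∧ y = v ∨ x = v ∧ y = u := by
  by_cases hx : x = v <;> by_cases hy : y = v
  · exact absurd (hx.trans hy.symm) hxy
  · simp only [hx, contractMap_self, contractMap_of_ne huv hy, Subtype.mk.injEq] at h
    exact .inr ⟨hx, h.symm⟩
  · simp only [hy, contractMap_self, contractMap_of_ne huv hx, Subtype.mk.injEq] at h
    exact .inl ⟨h, hy⟩
  · simp only [contractMap_of_ne huv hx, contractMap_of_ne huv hy, Subtype.mk.injEq] at h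
    exact absurd h hxy

lemma contractGraph_adj_contractMap {x y : V} (hxy : G.Adj x y)
    (hne : contractMap huv x ≠ contractMap huv y) :
    (contractGraph G u v).Adj (contractMap huv x) (contractMap huv y) := by
  refine ⟨hne, ?_⟩
  by_cases hx : x = v
  · subst hx
    have hy : y ≠ x := hxy.ne.symm
    simp [contractMap_of_ne huv hy, hxy]
  by_cases hy : y = v
  · subst hy
    simp [contractMap_of_ne huv hx, hxy.symm]
  · simp [contractMap_of_ne huv hx, contractMap_of_ne huv hy, hxy]

lemma exists_adj_of_contractGraph_adj {a b : {z : V // z ≠ v}}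
    (hab : (contractGraph G u v).Adj a b) :
    ∃ x y, G.Adj x y ∧ contractMap huv x = a ∧ contractMap huv y = b := by
  obtain ⟨-, hab | ⟨ha, hvb⟩ | ⟨hb, hva⟩⟩ := hab
  · exact ⟨a, b, hab, contractMap_val huv a, contractMap_val huv b⟩
  · exact ⟨v, b, hvb, by simp [Subtype.ext_iff, ha], contractMap_val huv b⟩
  · exact ⟨a, v, hva.symm, contractMap_val huv a, by simp [Subtype.ext_iff, hb]⟩

lemma contractMap_injOn_adj (hcommon : ∀ w, G.Adj u w → ¬G.Adj v w) {x₁ x₂ y₁ y₂ : V}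
    (hx : G.Adj x₁ x₂) (hy : G.Adj y₁ y₂) (hne : contractMap huv x₁ ≠ contractMap huv x₂)
    (h₁ : contractMap huv x₁ = contractMap huv y₁) (h₂ : contractMap huv x₂ = contractMap huv y₂) :
    x₁ = y₁ ∧ x₂ = y₂ := by
  by_cases e₁ : x₁ = y₁ <;> by_cases e₂ : x₂ = y₂
  · exact ⟨e₁, e₂⟩
  · subst e₁
    rcases contractMap_eq_of_ne huv h₂ e₂ with ⟨rfl, rfl⟩ | ⟨rfl, rfl⟩
    exacts [(hcommon x₁ hx.symm hy.symm).elim, (hcommon x₁ hy.symm hx.symm).elim]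
  · subst e₂
    rcases contractMap_eq_of_ne huv h₁ e₁ with ⟨rfl, rfl⟩ | ⟨rfl, rfl⟩
    exacts [(hcommon x₂ hx hy).elim, (hcommon x₂ hy hx).elim]
  · exfalso
    rcases contractMap_eq_of_ne huv h₁ e₁ with ⟨rfl, rfl⟩ | ⟨rfl, rfl⟩ <;>
      rcases contractMap_eq_of_ne huv h₂ e₂ with ⟨rfl, rfl⟩ | ⟨rfl, rfl⟩
    all_goals simp at hne hx

lemma assignCost_comp_contractMap [Fintype V] (hcommon : ∀ w, G.Adj u w → ¬G.Adj v w)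
    (g : {z : V // z ≠ v} → S) :
    assignCost G (g ∘ contractMap huv) = assignCost (contractGraph G u v) g := by
  unfold assignCost
  congr 1
  refine Finset.card_bij (fun p _ => (contractMap huv p.1, contractMap huv p.2)) ?_ ?_ ?_
  · rintro ⟨x, y⟩ hp
    simp only [Finset.mem_filter, Finset.mem_univ, true_and, Function.comp_apply] at hp ⊢
    exact ⟨contractGraph_adj_contractMap huv hp.1 fun h => hp.2 (congrArg g h), hp.2⟩
  · rintro ⟨x₁, x₂⟩ hx ⟨y₁, y₂⟩ hy h
    simp only [Finset.mem_filter, Finset.mem_univ, true_and, Function.comp_apply,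
      Prod.mk.injEq] at hx hy h
    obtain ⟨rfl, rfl⟩ :=
      contractMap_injOn_adj huv hcommon hx.1 hy.1 (fun h => hx.2 (congrArg g h)) h.1 h.2
    rfl
  · rintro ⟨a, b⟩ hab
    simp only [Finset.mem_filter, Finset.mem_univ, true_and] at hab
    obtain ⟨x, y, hxy, rfl, rfl⟩ := exists_adj_of_contractGraph_adj huv hab.1
    exact ⟨(x, y), by simp [hxy, hab.2], rfl⟩

lemma comp_val_comp_contractMap {f : V → S} (hf : f u = f v) :
    (f ∘ Subtype.val) ∘ contractMap huv = f := by
  funext x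
  by_cases hx : x = v
  · simp [hx, hf]
  · simp [contractMap_of_ne huv hx]

lemma extends_comp_contractMap_iff {ℓ : V → Option S} (hv : ℓ v = none)
    {g : {z : V // z ≠ v} → S} :
    Extends ℓ (g ∘ contractMap huv) ↔ Extends (fun a => ℓ a.1) g := by
  refine ⟨fun h a s ha => by simpa using h a.1 s ha, fun h x s hx => ?_⟩
  by_cases hxv : x = v
  · simp [hxv, hv] at hx
  · rw [Function.comp_apply, contractMap_of_ne huv hxv]
    exact h ⟨x, hxv⟩ s hx

variable [Fintype V] {ℓ : V → Option S} (hcommon : ∀ w, G.Adj u w → ¬G.Adj v w) (hv : ℓ v = none)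
include huv hcommon hv

lemma mpCost_contractGraph [Nonempty S] {f : V → S} (hf : IsOptimal G ℓ f)
    (hfuv : f u = f v) : mpCost (contractGraph G u v) (fun a => ℓ a.1) = mpCost G ℓ := by
  obtain ⟨g, hg⟩ := exists_isOptimal (contractGraph G u v) (fun a => ℓ a.1)
  refine le_antisymm ?_ ?_
  · have hext : Extends (fun a : {z : V // z ≠ v} => ℓ a.1) (f ∘ Subtype.val) := by
      rw [← extends_comp_contractMap_iff huv hv, comp_val_comp_contractMap huv hfuv]
      exact hf.1
    calc mpCost (contractGraph G u v) (fun a => ℓ a.1)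
        ≤ assignCost (contractGraph G u v) (f ∘ Subtype.val) := mpCost_le_assignCost _ hext
      _ = assignCost G f := by
        rw [← assignCost_comp_contractMap huv hcommon, comp_val_comp_contractMap huv hfuv]
      _ = mpCost G ℓ := hf.2
  · calc mpCost G ℓ
        ≤ assignCost G (g ∘ contractMap huv) :=
          mpCost_le_assignCost _ ((extends_comp_contractMap_iff huv hv).2 hg.1)
      _ = assignCost (contractGraph G u v) g := assignCost_comp_contractMap huv hcommon g
      _ = mpCost (contractGraph G u v) (fun a => ℓ a.1) := hg.2

lemma isOptimal_comp_contractMap_iff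
    (hmp : mpCost (contractGraph G u v) (fun a => ℓ a.1) = mpCost G ℓ)
    {g : {z : V // z ≠ v} → S} :
    IsOptimal G ℓ (g ∘ contractMap huv) ↔ IsOptimal (contractGraph G u v) (fun a => ℓ a.1) g := by
  rw [IsOptimal, IsOptimal, extends_comp_contractMap_iff huv hv,
    assignCost_comp_contractMap huv hcommon, hmp]

end Contraction

theorem contract_mpCost_and_rootSet_general {V S : Type} [Fintype V]
    (G : SimpleGraph V) (ℓ : V → Option S) (u v : V)
    (hT : G.IsTree) (hadj : G.Adj u v) (hv : ℓ v = none)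
    (hmeet : (rootSet G ℓ u ∩ rootSet G ℓ v).Nonempty) :
    mpCost (contractGraph G u v) (fun a => ℓ a.1) = mpCost G ℓ ∧
    rootSet (contractGraph G u v) (fun a => ℓ a.1) ⟨u, hadj.ne⟩ =
      rootSet G ℓ u ∩ rootSet G ℓ v := by
  obtain ⟨s, hs⟩ := hmeet
  have : Nonempty S := ⟨s⟩
  have hb := SimpleGraph.isAcyclic_iff_forall_adj_isBridge.mp hT.isAcyclic hadj
  have hcommon : ∀ w, G.Adj u w → ¬G.Adj v w := fun w => hb.not_adj_of_adj
  obtain ⟨f, hf, hfu, hfv⟩ := exists_isOptimal_eq_of_mem_rootSet_inter hb hs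
  have hmp := mpCost_contractGraph hadj.ne hcommon hv hf (hfu.trans hfv.symm)
  refine ⟨hmp, Set.ext fun t => ⟨?_, ?_⟩⟩
  · rintro ⟨g, hg, rfl⟩
    have hopt := (isOptimal_comp_contractMap_iff hadj.ne hcommon hv hmp).2 hg
    exact ⟨⟨_, hopt, by simp⟩, ⟨_, hopt, by simp⟩⟩
  · intro ht
    obtain ⟨f, hf, rfl, hfv⟩ := exists_isOptimal_eq_of_mem_rootSet_inter hb ht
    refine ⟨f ∘ Subtype.val, (isOptimal_comp_contractMap_iff hadj.ne hcommon hv hmp).1 ?_, rfl⟩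
    rwa [comp_val_comp_contractMap hadj.ne hfv.symm]

/-- If the root sets of the endpoints of an edge `(u, v)` (both unlabelled
internal nodes) intersect, then contracting the edge preserves the MP-cost,
and the root set of the merged vertex `w` equals `VV(u) ∩ VV(v)`. -/
theorem contract_mpCost_and_rootSet {V S : Type} [Fintype V]
    [Nonempty S] (G : SimpleGraph V) (ℓ : V → Option S) (u v : V)
    (hT : G.IsTree) (hadj : G.Adj u v) (hu : ℓ u = none) (hv : ℓ v = none)
    (hmeet : (rootSet G ℓ u ∩ rootSet G ℓ v).Nonempty) :
    mpCost (contractGraph G u v) (fun a => ℓ a.1) = mpCost G ℓ ∧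
    rootSet (contractGraph G u v) (fun a => ℓ a.1) ⟨u, hadj.ne⟩ =
      rootSet G ℓ u ∩ rootSet G ℓ v :=
  contract_mpCost_and_rootSet_general G ℓ u v hT hadj hv hmeet
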